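/- Let μ > 0 and α ≥ 1/(2μ), and set c = 1/(2μ). Then the exact value of the integral of the unit-rate exponential density against the piecewise-linear function Z is ∫₀^∞ e^{-x} Z(x) dx = 1 − μ ( e^{-(α−c)} − e^{-(α+c)} ); equivalently, 1 − ∫₀^∞ e^{-x} Z(x) dx = μ ( e^{-α + 1/(2μ)} − e^{-α − 1/(2μ)} ). (This is the exact form of the no-CSIT throughput expression.) -/

import Mathlib

/-!
Writing `c = 1/(2μ)`, the function `Z` is `1 - μ (x - (α - c))⁺ + μ (x - (α + c))⁺`, and for `a ≥ 0`
one has `∫₀^∞ e^{-x} (x - a)⁺ dx = e^{-a}`, since `-(x - a + 1) e^{-x}` is an antiderivative on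
`(a, ∞)`. The hypothesis `α ≥ c` puts both kinks of `Z` in `[0, ∞)`.
-/

open MeasureTheory Real

/-- Piecewise-linear approximation of the Gaussian Q-function with parameters μ, α. -/
noncomputable def Zfun (μ α x : ℝ) : ℝ :=
  if x < α - 1 / (2 * μ) then 1
  else if x ≤ α + 1 / (2 * μ) then 1 / 2 - μ * (x - α)
  else 0

open Filter Set Topology

section ExpNegRamp

variable (a : ℝ)

lemma tendsto_sub_add_one_mul_exp_neg_atTop :
    Tendsto (fun x => (x - a + 1) * exp (-x)) atTop (𝓝 0) := by
  have h := (tendsto_pow_mul_exp_neg_atTop_nhds_zero 1).add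
    ((tendsto_exp_neg_atTop_nhds_zero).const_mul (1 - a))
  simp only [pow_one, mul_zero, add_zero] at h
  exact h.congr fun x => by ring

lemma hasDerivAt_neg_sub_add_one_mul_exp_neg (x : ℝ) :
    HasDerivAt (fun x => -((x - a + 1) * exp (-x))) (exp (-x) * (x - a)) x := by
  refine ((((hasDerivAt_id' x).sub_const a).add_const 1).mul
    (hasDerivAt_neg' x).exp).neg.congr_deriv ?_
  ring

lemma integrableOn_exp_neg_mul_sub_Ioi : IntegrableOn (fun x => exp (-x) * (x - a)) (Ioi a) :=
  integrableOn_Ioi_deriv_of_nonneg' (fun x _ => hasDerivAt_neg_sub_add_one_mul_exp_neg a x)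
    (fun _ hx => mul_nonneg (exp_pos _).le (sub_nonneg.2 (mem_Ioi.1 hx).le))
    (tendsto_sub_add_one_mul_exp_neg_atTop a).neg

lemma integral_exp_neg_mul_sub_Ioi : ∫ x in Ioi a, exp (-x) * (x - a) = exp (-a) := by
  rw [integral_Ioi_of_hasDerivAt_of_tendsto'
    (fun x _ => hasDerivAt_neg_sub_add_one_mul_exp_neg a x) (integrableOn_exp_neg_mul_sub_Ioi a)
    (tendsto_sub_add_one_mul_exp_neg_atTop a).neg]
  simp

lemma eqOn_exp_neg_mul_max_sub_Ioi :
    EqOn (fun x => exp (-x) * max (x - a) 0) (fun x => exp (-x) * (x - a)) (Ioi a) :=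
  fun x hx => by simp only [max_eq_left (sub_nonneg.2 (mem_Ioi.1 hx).le)]

lemma exp_neg_mul_max_sub_of_notMem_Ioi {x : ℝ} (hx : x ∉ Ioi a) :
    exp (-x) * max (x - a) 0 = 0 := by
  rw [max_eq_right (sub_nonpos.2 (not_lt.1 hx)), mul_zero]

lemma integrable_exp_neg_mul_max_sub : Integrable (fun x => exp (-x) * max (x - a) 0) := by
  rw [← integrableOn_univ]
  exact ((integrableOn_exp_neg_mul_sub_Ioi a).congr_fun
    (eqOn_exp_neg_mul_max_sub_Ioi a).symm measurableSet_Ioi).of_forall_sdiff_eq_zero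
    MeasurableSet.univ fun x hx => exp_neg_mul_max_sub_of_notMem_Ioi a hx.2

lemma integral_exp_neg_mul_max_sub : ∫ x, exp (-x) * max (x - a) 0 = exp (-a) := by
  rw [← setIntegral_eq_integral_of_forall_compl_eq_zero
    fun x hx => exp_neg_mul_max_sub_of_notMem_Ioi a hx,
    setIntegral_congr_fun measurableSet_Ioi (eqOn_exp_neg_mul_max_sub_Ioi a),
    integral_exp_neg_mul_sub_Ioi]

end ExpNegRamp

lemma setIntegral_Ioi_zero_exp_neg_mul_max_sub {a : ℝ} (ha : 0 ≤ a) :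
    ∫ x in Ioi 0, exp (-x) * max (x - a) 0 = exp (-a) := by
  rw [setIntegral_eq_integral_of_forall_compl_eq_zero (s := Ioi 0) fun x hx =>
    exp_neg_mul_max_sub_of_notMem_Ioi a fun hxa => hx (ha.trans_lt hxa),
    integral_exp_neg_mul_max_sub]

lemma Zfun_eq_one_sub_mul_max_add_mul_max {μ : ℝ} (hμ : 0 < μ) (α x : ℝ) :
    Zfun μ α x = 1 - μ * max (x - (α - 1 / (2 * μ))) 0 + μ * max (x - (α + 1 / (2 * μ))) 0 := by
  have hc : 0 < 1 / (2 * μ) := by positivity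
  have hμc : μ * (1 / (2 * μ)) = 1 / 2 := by field_simp
  unfold Zfun
  split_ifs with h₁ h₂
  · rw [max_eq_right (by linarith), max_eq_right (by linarith)]; ring
  · rw [max_eq_left (by linarith), max_eq_right (by linarith)]; linear_combination hμc
  · rw [max_eq_left (by linarith), max_eq_left (by linarith)]; linear_combination 2 * hμc

/-- Exact value of the integral of the unit-rate exponential density against the
piecewise-linear approximation of the Q-function (exact no-CSIT throughput expression). -/
theorem stmt7 (μ α : ℝ) (hμ : 0 < μ) (hα : 1 / (2 * μ) ≤ α) :
    (∫ x in Set.Ioi (0:ℝ), Real.exp (-x) * Zfun μ α x)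
        = 1 - μ * (Real.exp (-(α - 1 / (2 * μ))) - Real.exp (-(α + 1 / (2 * μ)))) ∧
      1 - (∫ x in Set.Ioi (0:ℝ), Real.exp (-x) * Zfun μ α x)
        = μ * (Real.exp (-α + 1 / (2 * μ)) - Real.exp (-α - 1 / (2 * μ))) := by
  set c := 1 / (2 * μ)
  have hc : 0 < c := by positivity
  have hramp (a : ℝ) : IntegrableOn (fun x => μ * (exp (-x) * max (x - a) 0)) (Ioi 0) :=
    ((integrable_exp_neg_mul_max_sub a).const_mul μ).integrableOn
  have hexp : IntegrableOn (fun x => exp (-x)) (Ioi 0) := integrableOn_exp_neg_Ioi 0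
  have key : ∫ x in Ioi 0, exp (-x) * Zfun μ α x = 1 - μ * (exp (-(α - c)) - exp (-(α + c))) := by
    simp_rw [Zfun_eq_one_sub_mul_max_add_mul_max hμ]
    calc ∫ x in Ioi 0, exp (-x) * (1 - μ * max (x - (α - c)) 0 + μ * max (x - (α + c)) 0)
        = ∫ x in Ioi 0, (exp (-x) - μ * (exp (-x) * max (x - (α - c)) 0)
            + μ * (exp (-x) * max (x - (α + c)) 0)) := by congr! 2 with x; ring
      _ = 1 - μ * (exp (-(α - c)) - exp (-(α + c))) := by
        rw [integral_add (by exact hexp.sub (hramp _)) (hramp _), integral_sub hexp (hramp _),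
          integral_const_mul, integral_const_mul, integral_exp_neg_Ioi_zero,
          setIntegral_Ioi_zero_exp_neg_mul_max_sub (by linarith),
          setIntegral_Ioi_zero_exp_neg_mul_max_sub (by linarith)]
        ring
  refine ⟨key, ?_⟩
  rw [key]
  ring_nf
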